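/- arXiv:2312.14788 — 3 statements merged into one kernel-verified Lean document; each statement's English description precedes it below -/
import Mathlib

section
/- (FCE with non-informative prior.) Let (Ω, F, P) be a probability space, G ⊆ F a sub-σ-algebra, and θ : Ω → ℝ^d a random vector with square-integrable components, where d = p·q for naturals p, q. Let Y ∈ ℝ^{p×N} and Z ∈ ℝ^{q×N} be matrices with G-measurable entries such that ZZᵀ is invertible, and suppose that almost surely E[θ|G] = vec[Y Zᵀ(ZZᵀ)^{−1}] =: θ̄ and Var[θ|G] = σ²[(ZZᵀ)^{−1} ⊗ I_p] =: Σ_θ for some σ² > 0. Fix M_0 ∈ ℝ^{pT×d}, a linear map M : ℝ^{mT} → ℝ^{pT×d}, vectors y_r ∈ ℝ^{pT}, u_r, u_f ∈ ℝ^{mT}, and symmetric positive semidefinite Q ∈ ℝ^{pT×pT}, R ∈ ℝ^{mT×mT}. With L_t(u_f) := ‖y_r − (M_0 + M(u_f))θ‖_Q² + ‖u_r − u_f‖_R², one has almost surely E[L_t(u_f)|G] = J(u_f) + r(u_f), where J(u_f) = ‖y_r − (M_0 + M(u_f))θ̄‖_Q² + ‖u_r − u_f‖_R² and r(u_f) =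 Tr[Q (M_0 + M(u_f)) Σ_θ (M_0 + M(u_f))ᵀ]. -/
open Matrix MeasureTheory Kronecker

lemma memLp2_mul_integrable {Ω : Type*} [MeasurableSpace Ω] {μ : Measure Ω} {f g : Ω → ℝ}
    (hf : MemLp f 2 μ) (hg : MemLp g 2 μ) : Integrable (fun ω => f ω * g ω) μ := by
  have h : MemLp (f • g) 1 μ := hg.smul hf
  rw [← memLp_one_iff_integrable]
  exact h

lemma quad_expand {κ ι : Type*} [Fintype κ] [Fintype ι]
    (Q : Matrix κ κ ℝ) (hQs : Qᵀ = Q) (A : Matrix κ ι ℝ) (a : κ → ℝ) (d : ι → ℝ) :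
    (a - A *ᵥ d) ⬝ᵥ Q *ᵥ (a - A *ᵥ d)
      = a ⬝ᵥ Q *ᵥ a - 2 * ∑ i, (Aᵀ *ᵥ (Q *ᵥ a)) i * d i
        + ∑ i, ∑ j, (Aᵀ * Q * A) i j * (d i * d j) := by
  have hsym : a ⬝ᵥ Q *ᵥ (A *ᵥ d) = (A *ᵥ d) ⬝ᵥ Q *ᵥ a := by
    rw [Matrix.dotProduct_mulVec, ← Matrix.mulVec_transpose, hQs, dotProduct_comm]
  have hcross : (A *ᵥ d) ⬝ᵥ Q *ᵥ a = ∑ i, (Aᵀ *ᵥ (Q *ᵥ a)) i * d i := by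
    rw [dotProduct_comm, Matrix.dotProduct_mulVec, ← Matrix.mulVec_transpose]
    simp [dotProduct]
  have hquad : (A *ᵥ d) ⬝ᵥ Q *ᵥ (A *ᵥ d) = ∑ i, ∑ j, (Aᵀ * Q * A) i j * (d i * d j) := by
    rw [Matrix.mulVec_mulVec, dotProduct_comm, Matrix.dotProduct_mulVec,
      ← Matrix.mulVec_transpose, Matrix.mulVec_mulVec, ← Matrix.mul_assoc]
    simp only [dotProduct, Matrix.mulVec, Finset.sum_mul]
    refine Finset.sum_congr rfl fun i _ => Finset.sum_congr rfl fun j _ => by ring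
  rw [Matrix.mulVec_sub, sub_dotProduct, dotProduct_sub, dotProduct_sub,
    hsym, hcross, hquad]
  ring

lemma sm_mulVec {Ω : Type*} {G : MeasurableSpace Ω} {κ ι : Type*} [Fintype ι]
    (Mm : Matrix κ ι ℝ) (g : Ω → ι → ℝ) (hg : ∀ i, StronglyMeasurable[G] fun ω => g ω i)
    (k : κ) : StronglyMeasurable[G] fun ω => (Mm *ᵥ g ω) k := by
  simp only [Matrix.mulVec, dotProduct]
  exact Finset.stronglyMeasurable_fun_sum _ fun i _ => stronglyMeasurable_const.mul (hg i)

lemma memLp2_mulVec {Ω : Type*} [MeasurableSpace Ω] {μ : Measure Ω} {κ ι : Type*} [Fintype ι]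
    (Mm : Matrix κ ι ℝ) (g : Ω → ι → ℝ) (hg : ∀ i, MemLp (fun ω => g ω i) 2 μ)
    (k : κ) : MemLp (fun ω => (Mm *ᵥ g ω) k) 2 μ := by
  simp only [Matrix.mulVec, dotProduct]
  exact memLp_finset_sum _ fun i _ => (hg i).const_mul _

lemma memLp2_condexp {Ω : Type*} {G : MeasurableSpace Ω} [m0 : MeasurableSpace Ω]
    {μ : Measure Ω} [IsProbabilityMeasure μ]
    (hG : G ≤ m0) {f : Ω → ℝ} (hf : MemLp f 2 μ) :
    MemLp (μ[f|G]) 2 μ := by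
  have hgmem : MemLp ((condExpL2 ℝ ℝ hG (hf.toLp f) : Lp ℝ 2 μ) : Ω → ℝ) 2 μ := Lp.memLp _
  have hfL : ((condExpL2 ℝ ℝ hG (hf.toLp f) : Lp ℝ 2 μ) : Ω → ℝ) =ᵐ[μ] μ[f|G] := by
    apply ae_eq_condExp_of_forall_setIntegral_eq hG (hf.integrable one_le_two)
    · intro s _ hμs
      exact integrableOn_Lp_of_measure_ne_top _ fact_one_le_two_ennreal.elim hμs.ne
    · intro s hs hμs
      rw [integral_condExpL2_eq hG (hf.toLp f) hs hμs.ne]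
      exact setIntegral_congr_ae (hG s hs) ((hf.coeFn_toLp).mono fun x hx _ => hx)
    · exact aestronglyMeasurable_condExpL2 hG _
  exact hgmem.ae_eq hfL

lemma trace_quad {κ ι : Type*} [Fintype κ] [Fintype ι]
    (Q : Matrix κ κ ℝ) (A : Matrix κ ι ℝ) (S : Matrix ι ι ℝ) (hS : Sᵀ = S) :
    Matrix.trace (Q * A * S * Aᵀ) = ∑ i, ∑ j, (Aᵀ * Q * A) i j * S i j := by
  rw [Matrix.trace_mul_comm, ← Matrix.mul_assoc, ← Matrix.mul_assoc]
  simp only [Matrix.trace, Matrix.diag, Matrix.mul_apply]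
  refine Finset.sum_congr rfl fun i _ => Finset.sum_congr rfl fun j _ => ?_
  rw [← congrFun (congrFun hS j) i]
  rfl

lemma master {Ω : Type*} {G : MeasurableSpace Ω} [m0 : MeasurableSpace Ω]
    {μ : Measure Ω} [IsProbabilityMeasure μ] (hG : G ≤ m0)
    {ι κ : Type*} [Fintype ι] [Fintype κ]
    (θ : Ω → ι → ℝ) (hθ : ∀ i, MemLp (fun ω => θ ω i) 2 μ)
    (A : Matrix κ ι ℝ) (Q : Matrix κ κ ℝ) (hQs : Qᵀ = Q) (yr : κ → ℝ) (c : ℝ) :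
    ∀ᵐ ω ∂μ,
      (μ[fun ω' => (yr - A *ᵥ θ ω') ⬝ᵥ (Q *ᵥ (yr - A *ᵥ θ ω')) + c | G]) ω
        = (yr - A *ᵥ fun i => (μ[fun ω' => θ ω' i | G]) ω) ⬝ᵥ
            (Q *ᵥ (yr - A *ᵥ fun i => (μ[fun ω' => θ ω' i | G]) ω)) + c
          + ∑ i, ∑ j, (Aᵀ * Q * A) i j *
              (μ[fun ω' => (θ ω' i - (μ[fun ω'' => θ ω'' i | G]) ω')
                  * (θ ω' j - (μ[fun ω'' => θ ω'' j | G]) ω') | G]) ω := by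
  -- notation
  set θb : ι → Ω → ℝ := fun i => μ[fun ω' => θ ω' i | G] with hθbdef
  have hθbSM : ∀ i, StronglyMeasurable[G] (θb i) := fun i => stronglyMeasurable_condExp
  have hθbL2 : ∀ i, MemLp (θb i) 2 μ := fun i => memLp2_condexp hG (hθ i)
  set d : ι → Ω → ℝ := fun i ω' => θ ω' i - θb i ω' with hddef
  have hdL2 : ∀ i, MemLp (d i) 2 μ := fun i => (hθ i).sub (hθbL2 i)
  set a : Ω → κ → ℝ := fun ω => yr - A *ᵥ (fun i => θb i ω) with hadef
  have haSM : ∀ k, StronglyMeasurable[G] fun ω => a ω k := by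
    intro k
    have : (fun ω => a ω k) = fun ω => yr k - (A *ᵥ fun i => θb i ω) k := rfl
    rw [this]
    exact stronglyMeasurable_const.sub (sm_mulVec A (fun ω i => θb i ω) hθbSM k)
  have haL2 : ∀ k, MemLp (fun ω => a ω k) 2 μ := by
    intro k
    have : (fun ω => a ω k) = fun ω => yr k - (A *ᵥ fun i => θb i ω) k := rfl
    rw [this]
    exact (memLp_const _).sub (memLp2_mulVec A (fun ω i => θb i ω) hθbL2 k)
  have hwSM : ∀ i, StronglyMeasurable[G] fun ω => (Aᵀ *ᵥ (Q *ᵥ a ω)) i := fun i =>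
    sm_mulVec Aᵀ (fun ω => Q *ᵥ a ω) (fun kk => sm_mulVec Q a haSM kk) i
  have hwL2 : ∀ i, MemLp (fun ω => (Aᵀ *ᵥ (Q *ᵥ a ω)) i) 2 μ := fun i =>
    memLp2_mulVec Aᵀ (fun ω => Q *ᵥ a ω) (fun kk => memLp2_mulVec Q a haL2 kk) i
  -- the three pieces
  set F1 : Ω → ℝ := fun ω' => a ω' ⬝ᵥ (Q *ᵥ a ω') + c with hF1def
  set F2 : Ω → ℝ := fun ω' => (-2 : ℝ) * ∑ i, (Aᵀ *ᵥ (Q *ᵥ a ω')) i * d i ω' with hF2def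
  set F3 : Ω → ℝ := fun ω' => ∑ ij : ι × ι, (Aᵀ * Q * A) ij.1 ij.2 * (d ij.1 ω' * d ij.2 ω')
    with hF3def
  have hsplit : (fun ω' => (yr - A *ᵥ θ ω') ⬝ᵥ (Q *ᵥ (yr - A *ᵥ θ ω')) + c) = F1 + F2 + F3 := by
    funext ω'
    have h0 : yr - A *ᵥ θ ω' = a ω' - A *ᵥ (fun i => d i ω') := by
      have : (fun i => d i ω') = (fun i => θ ω' i) - fun i => θb i ω' := rfl
      rw [hadef, this, Matrix.mulVec_sub]
      exact (sub_sub_sub_cancel_right _ _ _).symm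
    rw [h0, quad_expand Q hQs A (a ω') (fun i => d i ω')]
    simp only [Pi.add_apply, hF1def, hF2def, hF3def, Fintype.sum_prod_type]
    ring
  -- integrability
  have hdot_int : Integrable (fun ω' => a ω' ⬝ᵥ (Q *ᵥ a ω')) μ := by
    have he : (fun ω' => a ω' ⬝ᵥ (Q *ᵥ a ω')) = fun ω' => ∑ k, a ω' k * (Q *ᵥ a ω') k := rfl
    rw [he]
    exact integrable_finset_sum _ fun k _ =>
      memLp2_mul_integrable (haL2 k) (memLp2_mulVec Q a haL2 k)
  have hF1int : Integrable F1 μ := by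
    rw [hF1def]; exact hdot_int.add (integrable_const c)
  have hF2term_int : ∀ i, Integrable (fun ω' => (Aᵀ *ᵥ (Q *ᵥ a ω')) i * d i ω') μ :=
    fun i => memLp2_mul_integrable (hwL2 i) (hdL2 i)
  have hF2int : Integrable F2 μ := by
    rw [hF2def]
    exact (integrable_finset_sum _ fun i _ => hF2term_int i).const_mul _
  have hF3term_int : ∀ ij : ι × ι,
      Integrable (fun ω' => (Aᵀ * Q * A) ij.1 ij.2 * (d ij.1 ω' * d ij.2 ω')) μ :=
    fun ij => (memLp2_mul_integrable (hdL2 ij.1) (hdL2 ij.2)).const_mul _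
  have hF3int : Integrable F3 μ := by
    rw [hF3def]; exact integrable_finset_sum _ fun ij _ => hF3term_int ij
  -- condexp of F1
  have hc1 : μ[F1|G] = F1 := by
    refine condExp_of_stronglyMeasurable hG ?_ hF1int
    rw [hF1def]
    have he : (fun ω' => a ω' ⬝ᵥ (Q *ᵥ a ω') + c)
        = fun ω' => (∑ k, a ω' k * (Q *ᵥ a ω') k) + c := rfl
    rw [he]
    exact (Finset.stronglyMeasurable_fun_sum _ fun k _ =>
      (haSM k).mul (sm_mulVec Q a haSM k)).add stronglyMeasurable_const
  -- condexp of d is 0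
  have hzero : ∀ i, μ[d i|G] =ᵐ[μ] 0 := by
    intro i
    have he : d i = (fun ω' => θ ω' i) - θb i := rfl
    have h1 : μ[d i|G] =ᵐ[μ] μ[fun ω' => θ ω' i|G] - μ[θb i|G] := by
      rw [he]
      exact condExp_sub ((hθ i).integrable one_le_two) integrable_condExp G
    have h2 : μ[θb i|G] =ᵐ[μ] μ[fun ω' => θ ω' i|G] := condExp_condExp_of_le le_rfl hG
    filter_upwards [h1, h2] with ω hω1 hω2
    simp only [hω1, Pi.sub_apply, hω2, sub_self, Pi.zero_apply]
  -- condexp of F2 is 0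
  have hterm2 : ∀ i, μ[fun ω' => (Aᵀ *ᵥ (Q *ᵥ a ω')) i * d i ω'|G] =ᵐ[μ] 0 := by
    intro i
    have he : (fun ω' => (Aᵀ *ᵥ (Q *ᵥ a ω')) i * d i ω')
        = (fun ω => (Aᵀ *ᵥ (Q *ᵥ a ω)) i) * d i := rfl
    rw [he]
    have hmul := condExp_mul_of_stronglyMeasurable_left (hwSM i)
      (by rw [← he]; exact hF2term_int i) ((hdL2 i).integrable one_le_two)
    refine hmul.trans ?_
    filter_upwards [hzero i] with ω hω
    simp only [Pi.mul_apply, hω, Pi.zero_apply, mul_zero]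
  have hc2 : μ[F2|G] =ᵐ[μ] 0 := by
    rw [hF2def]
    have he : (fun ω' => (-2 : ℝ) * ∑ i, (Aᵀ *ᵥ (Q *ᵥ a ω')) i * d i ω')
        = (-2 : ℝ) • ∑ i : ι, (fun ω' => (Aᵀ *ᵥ (Q *ᵥ a ω')) i * d i ω') := by
      funext ω'; simp [Finset.sum_apply]
    rw [he]
    refine (condExp_smul (-2 : ℝ) _ G).trans ?_
    have hsum := condExp_finset_sum (μ := μ) (m := G)
      (f := fun i => fun ω' => (Aᵀ *ᵥ (Q *ᵥ a ω')) i * d i ω')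
      (s := Finset.univ) (fun i _ => hF2term_int i)
    have hall : ∀ᵐ ω ∂μ, ∀ i : ι,
        (μ[fun ω' => (Aᵀ *ᵥ (Q *ᵥ a ω')) i * d i ω'|G]) ω = 0 :=
      ae_all_iff.2 fun i => hterm2 i
    filter_upwards [hsum, hall] with ω h1 h2
    simp only [Pi.smul_apply, h1, Finset.sum_apply, h2, Finset.sum_const_zero, smul_zero,
      Pi.zero_apply]
  -- condexp of F3
  have hc3 : ∀ᵐ ω ∂μ, (μ[F3|G]) ω
      = ∑ ij : ι × ι, (Aᵀ * Q * A) ij.1 ij.2 * (μ[fun ω' => d ij.1 ω' * d ij.2 ω'|G]) ω := by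
    have hF3eq : F3 = ∑ ij : ι × ι, fun ω' => (Aᵀ * Q * A) ij.1 ij.2 * (d ij.1 ω' * d ij.2 ω') := by
      rw [hF3def]; funext ω'; simp [Finset.sum_apply]
    have hsum := condExp_finset_sum (μ := μ) (m := G)
      (f := fun ij : ι × ι => fun ω' => (Aᵀ * Q * A) ij.1 ij.2 * (d ij.1 ω' * d ij.2 ω'))
      (s := Finset.univ) (fun ij _ => hF3term_int ij)
    have hterm3 : ∀ ij : ι × ι,
        μ[fun ω' => (Aᵀ * Q * A) ij.1 ij.2 * (d ij.1 ω' * d ij.2 ω')|G]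
          =ᵐ[μ] (Aᵀ * Q * A) ij.1 ij.2 • μ[fun ω' => d ij.1 ω' * d ij.2 ω'|G] := by
      intro ij
      have he : (fun ω' => (Aᵀ * Q * A) ij.1 ij.2 * (d ij.1 ω' * d ij.2 ω'))
          = (Aᵀ * Q * A) ij.1 ij.2 • fun ω' => d ij.1 ω' * d ij.2 ω' := by
        funext ω'; simp [smul_eq_mul]
      rw [he]
      exact condExp_smul _ _ G
    have hall : ∀ᵐ ω ∂μ, ∀ ij : ι × ι,
        (μ[fun ω' => (Aᵀ * Q * A) ij.1 ij.2 * (d ij.1 ω' * d ij.2 ω')|G]) ω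
          = (Aᵀ * Q * A) ij.1 ij.2 * (μ[fun ω' => d ij.1 ω' * d ij.2 ω'|G]) ω := by
      refine ae_all_iff.2 fun ij => ?_
      filter_upwards [hterm3 ij] with ω hω
      simpa [smul_eq_mul] using hω
    rw [hF3eq]
    filter_upwards [hsum, hall] with ω h1 h2
    simp only [h1, Finset.sum_apply, h2]
  -- assemble
  have hadd1 : μ[F1 + F2 + F3|G] =ᵐ[μ] μ[F1 + F2|G] + μ[F3|G] :=
    condExp_add (hF1int.add hF2int) hF3int G
  have hadd2 : μ[F1 + F2|G] =ᵐ[μ] μ[F1|G] + μ[F2|G] := condExp_add hF1int hF2int G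
  rw [hsplit]
  filter_upwards [hadd1, hadd2, hc2, hc3] with ω h1 h2 h2z h3
  rw [h1, Pi.add_apply, h2, Pi.add_apply, hc1]
  have h2z' : (μ[F2|G]) ω = 0 := by simpa using h2z
  rw [h2z', h3, add_zero]
  rw [hF1def, Fintype.sum_prod_type]


/-- FCE with non-informative prior: if the conditional mean and covariance of
`θ` given `G` are a.s. given by `θ̄ = vec[Y Zᵀ(ZZᵀ)⁻¹]` and `Σ_θ = σ²[(ZZᵀ)⁻¹ ⊗ I_p]`, with
`Y, Z` `G`-measurable and `ZZᵀ` invertible, then for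
`L_t(u_f) := ‖y_r − (M_0 + M u_f)θ‖_Q² + ‖u_r − u_f‖_R²` one has a.s.
`E[L_t(u_f)|G] = ‖y_r − (M_0 + M u_f)θ̄‖_Q² + ‖u_r − u_f‖_R²
               + Tr[Q (M_0 + M u_f) Σ_θ (M_0 + M u_f)ᵀ]`.
(Here `θ` takes values in `ℝ^{p·q}`, indexed column-major by `Fin q × Fin p`.) -/
theorem stmt_7 {Ω : Type*} [m0 : MeasurableSpace Ω] (μ : Measure Ω) [IsProbabilityMeasure μ]
    (G : MeasurableSpace Ω) (hG : G ≤ m0)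
    (p q N pT mT : ℕ)
    (θ : Ω → Fin q × Fin p → ℝ) (hθ : ∀ i, MemLp (fun ω => θ ω i) 2 μ)
    (Y : Ω → Matrix (Fin p) (Fin N) ℝ) (Z : Ω → Matrix (Fin q) (Fin N) ℝ)
    (hY : ∀ i j, Measurable[G] fun ω => Y ω i j)
    (hZ : ∀ i j, Measurable[G] fun ω => Z ω i j)
    (hZZ : ∀ ω, IsUnit (Z ω * (Z ω)ᵀ))
    (σsq : ℝ) (hσ : 0 < σsq)
    -- θ̄ := E[θ|G] = vec[Y Zᵀ(ZZᵀ)⁻¹] a.s.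
    (hmean : ∀ᵐ ω ∂μ, (fun i => (μ[fun ω' => θ ω' i | G]) ω)
      = fun i : Fin q × Fin p => (Y ω * (Z ω)ᵀ * (Z ω * (Z ω)ᵀ)⁻¹) i.2 i.1)
    -- Var[θ|G] = σ²[(ZZᵀ)⁻¹ ⊗ I_p] a.s.
    (hvar : ∀ᵐ ω ∂μ, (Matrix.of fun i j =>
        (μ[fun ω' => (θ ω' i - (μ[fun ω'' => θ ω'' i | G]) ω')
            * (θ ω' j - (μ[fun ω'' => θ ω'' j | G]) ω') | G]) ω)
      = σsq • ((Z ω * (Z ω)ᵀ)⁻¹ ⊗ₖ (1 : Matrix (Fin p) (Fin p) ℝ)))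
    (M0 : Matrix (Fin pT) (Fin q × Fin p) ℝ)
    (M : (Fin mT → ℝ) →ₗ[ℝ] Matrix (Fin pT) (Fin q × Fin p) ℝ)
    (yr : Fin pT → ℝ) (ur uf : Fin mT → ℝ)
    (Q : Matrix (Fin pT) (Fin pT) ℝ) (R : Matrix (Fin mT) (Fin mT) ℝ)
    (hQ : Q.PosSemidef) (hR : R.PosSemidef) :
    ∀ᵐ ω ∂μ,
      (μ[fun ω' => (yr - (M0 + M uf) *ᵥ θ ω') ⬝ᵥ (Q *ᵥ (yr - (M0 + M uf) *ᵥ θ ω'))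
          + (ur - uf) ⬝ᵥ (R *ᵥ (ur - uf)) | G]) ω
        = ((yr - (M0 + M uf) *ᵥ
              (fun i : Fin q × Fin p => (Y ω * (Z ω)ᵀ * (Z ω * (Z ω)ᵀ)⁻¹) i.2 i.1)) ⬝ᵥ
            (Q *ᵥ (yr - (M0 + M uf) *ᵥ
              (fun i : Fin q × Fin p => (Y ω * (Z ω)ᵀ * (Z ω * (Z ω)ᵀ)⁻¹) i.2 i.1)))
            + (ur - uf) ⬝ᵥ (R *ᵥ (ur - uf)))
          + Matrix.trace (Q * (M0 + M uf) *
              (σsq • ((Z ω * (Z ω)ᵀ)⁻¹ ⊗ₖ (1 : Matrix (Fin p) (Fin p) ℝ))) *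
              (M0 + M uf)ᵀ) := by
  have hQs : Qᵀ = Q := hQ.1.eq
  have hmaster := master (m0 := m0) hG θ hθ (M0 + M uf) Q hQs yr ((ur - uf) ⬝ᵥ (R *ᵥ (ur - uf)))
  filter_upwards [hmaster, hmean, hvar] with ω hma hm hv
  rw [hma, hm]
  congr 1
  -- remaining: sum = trace
  set A : Matrix (Fin pT) (Fin q × Fin p) ℝ := M0 + M uf with hA
  set S : Matrix (Fin q × Fin p) (Fin q × Fin p) ℝ
    := σsq • ((Z ω * (Z ω)ᵀ)⁻¹ ⊗ₖ (1 : Matrix (Fin p) (Fin p) ℝ)) with hS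
  have hvij : ∀ i j, (μ[fun ω' => (θ ω' i - (μ[fun ω'' => θ ω'' i | G]) ω')
      * (θ ω' j - (μ[fun ω'' => θ ω'' j | G]) ω') | G]) ω = S i j := by
    intro i j
    have := congrFun (congrFun hv i) j
    simpa using this
  have hCsymm : ∀ i j, (μ[fun ω' => (θ ω' i - (μ[fun ω'' => θ ω'' i | G]) ω')
      * (θ ω' j - (μ[fun ω'' => θ ω'' j | G]) ω') | G]) ω
      = (μ[fun ω' => (θ ω' j - (μ[fun ω'' => θ ω'' j | G]) ω')
      * (θ ω' i - (μ[fun ω'' => θ ω'' i | G]) ω') | G]) ω := by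
    intro i j
    have he : (fun ω' => (θ ω' i - (μ[fun ω'' => θ ω'' i | G]) ω')
        * (θ ω' j - (μ[fun ω'' => θ ω'' j | G]) ω'))
        = fun ω' => (θ ω' j - (μ[fun ω'' => θ ω'' j | G]) ω')
        * (θ ω' i - (μ[fun ω'' => θ ω'' i | G]) ω') := funext fun ω' => mul_comm _ _
    rw [he]
  have hSsym : Sᵀ = S := by
    ext i j
    rw [Matrix.transpose_apply, ← hvij, hCsymm, hvij]
  rw [trace_quad Q A S hSsym]
  exact Finset.sum_congr rfl fun i _ => Finset.sum_congr rfl fun j _ => by rw [hvij]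
end

section
/- Let Z_P ∈ ℝ^{a×N}, U_F ∈ ℝ^{b×N}, Y_F ∈ ℝ^{c×N} admit an LQ decomposition as follows: there exist L_{11} ∈ ℝ^{a×a}, L_{21} ∈ ℝ^{b×a}, L_{22} ∈ ℝ^{b×b}, L_{31} ∈ ℝ^{c×a}, L_{32} ∈ ℝ^{c×b}, L_{33} ∈ ℝ^{c×c} with L_{11} and L_{22} invertible, and Q_1 ∈ ℝ^{a×N}, Q_2 ∈ ℝ^{b×N}, Q_3 ∈ ℝ^{c×N} with orthonormal stacked rows (Q_i Q_iᵀ = I, Q_i Q_jᵀ = 0 for i ≠ j), such that Z_P = L_{11}Q_1, U_F = L_{21}Q_1 + L_{22}Q_2, Y_F = L_{31}Q_1 + L_{32}Q_2 + L_{33}Q_3. Let H := [Z_P; U_F] and Π := Hᵀ(HHᵀ)^{−1}H. Suppose Ŵ ∈ ℝ^{c×c} is invertible and Φ_P ∈ ℝ^{c×a}, Φ_u ∈ ℝ^{c×b} satisfy Y_F Π = Ŵ^{−1} Φ_P Z_P + Ŵ^{−1} Φ_u U_F. Then Φ_u = Ŵ L_{32} L_{22}^{−1} and Φ_P = Ŵ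 (L_{31} − L_{32}L_{22}^{−1}L_{21}) L_{11}^{−1}. -/
open Matrix

/-!
Write `H = [Z_P; U_F] = L Q` with `L = [L₁₁ 0; L₂₁ L₂₂]` invertible and `Q = [Q₁; Q₂]` with
orthonormal rows. The projector `Hᵀ(HHᵀ)⁻¹H` does not change when `H` is multiplied on the left by
an invertible matrix, so it equals `QᵀQ`, and `Y_F QᵀQ = [L₃₁ L₃₂] Q` because `Q₃ ⟂ Q`. The
hypothesis then reads `[L₃₁ L₃₂] Q = Ŵ⁻¹ [Φ_P Φ_u] L Q`; cancelling `Q` (it has the right inverse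
`Qᵀ`) gives `[Φ_P Φ_u] = Ŵ [L₃₁ L₃₂] L⁻¹`, and the block-triangular inverse of `L` yields the two
formulas.
-/

namespace Matrix

variable {m n p q R : Type*} [Fintype n] [CommRing R]

theorem fromRows_mul_transpose_self_eq_one [DecidableEq m] [Fintype p] [DecidableEq p]
    {Q₁ : Matrix m n R} {Q₂ : Matrix p n R}
    (h₁₁ : Q₁ * Q₁ᵀ = 1) (h₂₂ : Q₂ * Q₂ᵀ = 1) (h₁₂ : Q₁ * Q₂ᵀ = 0) :
    fromRows Q₁ Q₂ * (fromRows Q₁ Q₂)ᵀ = 1 := by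
  have h₂₁ : Q₂ * Q₁ᵀ = 0 := by simpa using congrArg transpose h₁₂
  rw [transpose_fromRows, fromRows_mul_fromCols, h₁₁, h₂₂, h₁₂, h₂₁, fromBlocks_one]

theorem mul_transpose_fromRows_eq_zero {Q₁ : Matrix m n R} {Q₂ : Matrix p n R}
    {Q₃ : Matrix q n R} (h₁₃ : Q₁ * Q₃ᵀ = 0) (h₂₃ : Q₂ * Q₃ᵀ = 0) :
    Q₃ * (fromRows Q₁ Q₂)ᵀ = 0 := by
  have h₃₁ : Q₃ * Q₁ᵀ = 0 := by simpa using congrArg transpose h₁₃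
  have h₃₂ : Q₃ * Q₂ᵀ = 0 := by simpa using congrArg transpose h₂₃
  rw [transpose_fromRows, mul_fromCols, h₃₁, h₃₂, fromCols_zero]

section

variable [Fintype m] [DecidableEq m]

/-- The paper's `Π`; it is the orthogonal projector onto the row space of `H` only when `HHᵀ`
is invertible, since otherwise `(HHᵀ)⁻¹ = 0`. -/
noncomputable def rowSpaceProj (H : Matrix m n R) : Matrix n n R := Hᵀ * (H * Hᵀ)⁻¹ * H

theorem rowSpaceProj_mul_left {L : Matrix m m R} (hL : IsUnit L) (H : Matrix m n R) :
    rowSpaceProj (L * H) = rowSpaceProj H := by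
  have hLdet : IsUnit L.det := (isUnit_iff_isUnit_det L).mp hL
  have hLTdet : IsUnit Lᵀ.det := by rwa [det_transpose]
  have hgram : L * H * (L * H)ᵀ = L * (H * Hᵀ) * Lᵀ := by
    simp only [transpose_mul, Matrix.mul_assoc]
  rw [rowSpaceProj, rowSpaceProj, hgram, Matrix.mul_inv_rev, Matrix.mul_inv_rev, transpose_mul]
  simp only [Matrix.mul_assoc, mul_nonsing_inv_cancel_left _ _ hLTdet,
    nonsing_inv_mul_cancel_left _ _ hLdet]

theorem rowSpaceProj_of_mul_transpose_eq_one {Q : Matrix m n R} (hQ : Q * Qᵀ = 1) :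
    rowSpaceProj Q = Qᵀ * Q := by
  simp [rowSpaceProj, hQ]

theorem add_mul_rowSpaceProj_of_orthogonal [Fintype p] {Q : Matrix m n R} {Q' : Matrix p n R}
    (hQ : Q * Qᵀ = 1) (hQ' : Q' * Qᵀ = 0) (A : Matrix q m R) (B : Matrix q p R) :
    (A * Q + B * Q') * rowSpaceProj Q = A * Q := by
  rw [rowSpaceProj_of_mul_transpose_eq_one hQ, Matrix.add_mul, Matrix.mul_assoc A,
    Matrix.mul_assoc B, ← Matrix.mul_assoc Q, ← Matrix.mul_assoc Q', hQ, hQ']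
  simp

theorem mul_right_cancel_of_mul_transpose_eq_one {Q : Matrix m n R} (hQ : Q * Qᵀ = 1)
    {A B : Matrix p m R} (h : A * Q = B * Q) : A = B := by
  simpa [Matrix.mul_assoc, hQ] using congrArg (· * Qᵀ) h

theorem fromCols_mul_inv_fromBlocks_zero₁₂ [Fintype p] [DecidableEq p]
    {A : Matrix m m R} {C : Matrix p m R} {D : Matrix p p R} (hA : IsUnit A) (hD : IsUnit D)
    (Y₁ : Matrix q m R) (Y₂ : Matrix q p R) :
    fromCols Y₁ Y₂ * (fromBlocks A 0 C D)⁻¹ = fromCols ((Y₁ - Y₂ * D⁻¹ * C) * A⁻¹) (Y₂ * D⁻¹) := by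
  rw [inv_fromBlocks_zero₁₂_of_isUnit_iff _ _ _ (iff_of_true hA hD), fromCols_mul_fromBlocks]
  simp [Matrix.mul_assoc, sub_eq_add_neg, Matrix.add_mul, Matrix.neg_mul]

end

end Matrix

theorem stmt_11_general (a b c N : ℕ)
    (ZP : Matrix (Fin a) (Fin N) ℝ) (UF : Matrix (Fin b) (Fin N) ℝ)
    (YF : Matrix (Fin c) (Fin N) ℝ)
    (L11 : Matrix (Fin a) (Fin a) ℝ) (L21 : Matrix (Fin b) (Fin a) ℝ)
    (L22 : Matrix (Fin b) (Fin b) ℝ) (L31 : Matrix (Fin c) (Fin a) ℝ)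
    (L32 : Matrix (Fin c) (Fin b) ℝ) (L33 : Matrix (Fin c) (Fin c) ℝ)
    (hL11 : IsUnit L11) (hL22 : IsUnit L22)
    (Q1 : Matrix (Fin a) (Fin N) ℝ) (Q2 : Matrix (Fin b) (Fin N) ℝ)
    (Q3 : Matrix (Fin c) (Fin N) ℝ)
    (h11 : Q1 * Q1ᵀ = 1) (h22 : Q2 * Q2ᵀ = 1)
    (h12 : Q1 * Q2ᵀ = 0) (h13 : Q1 * Q3ᵀ = 0) (h23 : Q2 * Q3ᵀ = 0)
    (hZP : ZP = L11 * Q1) (hUF : UF = L21 * Q1 + L22 * Q2)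
    (hYF : YF = L31 * Q1 + L32 * Q2 + L33 * Q3)
    (What : Matrix (Fin c) (Fin c) ℝ) (hWhat : IsUnit What)
    (ΦP : Matrix (Fin c) (Fin a) ℝ) (Φu : Matrix (Fin c) (Fin b) ℝ)
    (hproj : YF * ((Matrix.fromRows ZP UF)ᵀ *
        (Matrix.fromRows ZP UF * (Matrix.fromRows ZP UF)ᵀ)⁻¹ * Matrix.fromRows ZP UF)
      = What⁻¹ * ΦP * ZP + What⁻¹ * Φu * UF) :
    Φu = What * L32 * L22⁻¹ ∧
    ΦP = What * (L31 - L32 * L22⁻¹ * L21) * L11⁻¹ := by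
  set Q := fromRows Q1 Q2
  set L := fromBlocks L11 0 L21 L22
  have hQ : Q * Qᵀ = 1 := fromRows_mul_transpose_self_eq_one h11 h22 h12
  have hL : IsUnit L := isUnit_fromBlocks_zero₁₂.mpr ⟨hL11, hL22⟩
  have hH : fromRows ZP UF = L * Q := by
    rw [fromBlocks_mul_fromRows, hZP, hUF]
    simp
  have hY : YF = fromCols L31 L32 * Q + L33 * Q3 := by rw [hYF, fromCols_mul_fromRows]
  have hcoef : fromCols L31 L32 = What⁻¹ * fromCols ΦP Φu * L := by
    apply mul_right_cancel_of_mul_transpose_eq_one hQ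
    calc fromCols L31 L32 * Q = YF * rowSpaceProj (fromRows ZP UF) := by
          rw [hH, rowSpaceProj_mul_left hL, hY,
            add_mul_rowSpaceProj_of_orthogonal hQ (mul_transpose_fromRows_eq_zero h13 h23)]
      _ = What⁻¹ * ΦP * ZP + What⁻¹ * Φu * UF := hproj
      _ = What⁻¹ * fromCols ΦP Φu * L * Q := by
          rw [Matrix.mul_assoc _ L, ← hH]
          simp only [Matrix.mul_assoc, fromCols_mul_fromRows, Matrix.mul_add]
  have hΦ : fromCols ΦP Φu = What * fromCols L31 L32 * L⁻¹ := by
    rw [hcoef, Matrix.mul_assoc What⁻¹,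
      mul_nonsing_inv_cancel_left _ _ ((isUnit_iff_isUnit_det What).mp hWhat),
      mul_nonsing_inv_cancel_right _ _ ((isUnit_iff_isUnit_det L).mp hL)]
  rw [Matrix.mul_assoc, fromCols_mul_inv_fromBlocks_zero₁₂ hL11 hL22, mul_fromCols] at hΦ
  obtain ⟨hP, hu⟩ := fromCols_inj hΦ
  exact ⟨hu.trans (Matrix.mul_assoc _ _ _).symm, hP.trans (Matrix.mul_assoc _ _ _).symm⟩

/-- given an LQ decomposition as in Statement 10, if `Ŵ` is invertible and
`Φ_P, Φ_u` satisfy `Y_F Π = Ŵ⁻¹ Φ_P Z_P + Ŵ⁻¹ Φ_u U_F` (with `H = [Z_P; U_F]` and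
`Π := Hᵀ(HHᵀ)⁻¹H`), then `Φ_u = Ŵ L₃₂ L₂₂⁻¹` and
`Φ_P = Ŵ (L₃₁ − L₃₂L₂₂⁻¹L₂₁) L₁₁⁻¹`. -/
theorem stmt_11 (a b c N : ℕ)
    (ZP : Matrix (Fin a) (Fin N) ℝ) (UF : Matrix (Fin b) (Fin N) ℝ)
    (YF : Matrix (Fin c) (Fin N) ℝ)
    (L11 : Matrix (Fin a) (Fin a) ℝ) (L21 : Matrix (Fin b) (Fin a) ℝ)
    (L22 : Matrix (Fin b) (Fin b) ℝ) (L31 : Matrix (Fin c) (Fin a) ℝ)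
    (L32 : Matrix (Fin c) (Fin b) ℝ) (L33 : Matrix (Fin c) (Fin c) ℝ)
    (hL11 : IsUnit L11) (hL22 : IsUnit L22)
    (Q1 : Matrix (Fin a) (Fin N) ℝ) (Q2 : Matrix (Fin b) (Fin N) ℝ)
    (Q3 : Matrix (Fin c) (Fin N) ℝ)
    (h11 : Q1 * Q1ᵀ = 1) (h22 : Q2 * Q2ᵀ = 1) (h33 : Q3 * Q3ᵀ = 1)
    (h12 : Q1 * Q2ᵀ = 0) (h13 : Q1 * Q3ᵀ = 0) (h23 : Q2 * Q3ᵀ = 0)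
    (hZP : ZP = L11 * Q1) (hUF : UF = L21 * Q1 + L22 * Q2)
    (hYF : YF = L31 * Q1 + L32 * Q2 + L33 * Q3)
    (What : Matrix (Fin c) (Fin c) ℝ) (hWhat : IsUnit What)
    (ΦP : Matrix (Fin c) (Fin a) ℝ) (Φu : Matrix (Fin c) (Fin b) ℝ)
    (hproj : YF * ((Matrix.fromRows ZP UF)ᵀ *
        (Matrix.fromRows ZP UF * (Matrix.fromRows ZP UF)ᵀ)⁻¹ * Matrix.fromRows ZP UF)
      = What⁻¹ * ΦP * ZP + What⁻¹ * Φu * UF) :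
    Φu = What * L32 * L22⁻¹ ∧
    ΦP = What * (L31 - L32 * L22⁻¹ * L21) * L11⁻¹ :=
  stmt_11_general a b c N ZP UF YF L11 L21 L22 L31 L32 L33 hL11 hL22 Q1 Q2 Q3 h11 h22 h12 h13 h23
    hZP hUF hYF What hWhat ΦP Φu hproj
end

section
/- Fix θ̄ ∈ ℝ^d, a symmetric positive semidefinite matrix Σ_θ ∈ ℝ^{d×d}, M_0 ∈ ℝ^{pT×d}, a linear map M : ℝ^{mT} → ℝ^{pT×d}, vectors y_r ∈ ℝ^{pT}, u_r ∈ ℝ^{mT}, and symmetric positive semidefinite matrices Q ∈ ℝ^{pT×pT}, R ∈ ℝ^{mT×mT}. Then the Final Control Error FCE : ℝ^{mT} → ℝ defined by FCE(u_f) := ‖y_r − (M_0 + M(u_f))θ̄‖_Q² + ‖u_r − u_f‖_R² + Tr[Q (M_0 + M(u_f)) Σ_θ (M_0 + M(u_f))ᵀ] is a convex function of u_f. -/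
open Matrix Set
open scoped ComplexOrder

/-!
Each of the three terms is a nonnegative quadratic form composed with an affine function of
`u_f`, hence convex. For the trace term the quadratic form is `D ↦ Tr[Q D Σ_θ Dᵀ]` on matrices;
it is nonnegative because `D Σ_θ Dᵀ` is positive semidefinite and the trace of a product of two
positive semidefinite matrices is nonnegative.
-/

theorem LinearMap.BilinForm.convexOn_univ_apply_self {𝕜 E : Type*} [Field 𝕜] [LinearOrder 𝕜]
    [IsStrictOrderedRing 𝕜] [AddCommGroup E] [Module 𝕜 E] (B : LinearMap.BilinForm 𝕜 E)
    (hB : ∀ x, 0 ≤ B x x) : ConvexOn 𝕜 univ fun x => B x x := by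
  refine ⟨convex_univ, fun x _ y _ a b ha hb hab => ?_⟩
  -- `a B(x,x) + b B(y,y) - B(ax+by, ax+by) = a b B(x-y, x-y)` when `a + b = 1`
  have hxy := mul_nonneg (mul_nonneg ha hb) (hB (x - y))
  obtain rfl : b = 1 - a := by linear_combination hab
  simp only [map_add, map_sub, map_smul, LinearMap.add_apply, LinearMap.sub_apply,
    LinearMap.smul_apply, smul_eq_mul] at hxy ⊢
  linear_combination hxy

theorem Matrix.PosSemidef.convexOn_dotProduct_mulVec {𝕜 n : Type*} [Field 𝕜] [LinearOrder 𝕜]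
    [IsStrictOrderedRing 𝕜] [StarRing 𝕜] [TrivialStar 𝕜] [Fintype n] {Q : Matrix n n 𝕜}
    (hQ : Q.PosSemidef) : ConvexOn 𝕜 univ fun x : n → 𝕜 => x ⬝ᵥ (Q *ᵥ x) := by
  classical
  simpa [toLinearMap₂'_apply'] using
    LinearMap.BilinForm.convexOn_univ_apply_self (toLinearMap₂' 𝕜 Q) fun x => by
      simpa [toLinearMap₂'_apply'] using hQ.dotProduct_mulVec_nonneg x

theorem Matrix.PosSemidef.trace_mul_nonneg {𝕜 n : Type*} [RCLike 𝕜] [Fintype n]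
    {A B : Matrix n n 𝕜} (hA : A.PosSemidef) (hB : B.PosSemidef) : 0 ≤ (A * B).trace := by
  classical
  open scoped MatrixOrder in
  obtain ⟨C, rfl⟩ := CStarAlgebra.nonneg_iff_eq_star_mul_self.mp hA.nonneg
  rw [Matrix.mul_assoc, trace_mul_comm, star_eq_conjTranspose]
  exact (hB.mul_mul_conjTranspose_same C).trace_nonneg

theorem ConvexOn.comp_add_linearMap {𝕜 E F β : Type*} [Semiring 𝕜] [PartialOrder 𝕜]
    [AddCommGroup E] [AddCommGroup F] [Module 𝕜 E] [Module 𝕜 F] [AddCommMonoid β]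
    [PartialOrder β] [SMul 𝕜 β]
    {f : F → β} (hf : ConvexOn 𝕜 univ f) (b : F) (A : E →ₗ[𝕜] F) :
    ConvexOn 𝕜 univ fun x => f (b + A x) := by
  simpa [Function.comp_def] using (hf.translate_right b).comp_linearMap A

theorem convexOn_trace_mul_mul_mul_transpose {m n : Type*} [Fintype m] [Fintype n]
    {Q : Matrix m m ℝ} {S : Matrix n n ℝ} (hQ : Q.PosSemidef) (hS : S.PosSemidef) :
    ConvexOn ℝ univ fun D : Matrix m n ℝ => (Q * D * S * Dᵀ).trace := by
  let B : LinearMap.BilinForm ℝ (Matrix m n ℝ) := LinearMap.mk₂ ℝ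
    (fun D E => (Q * D * S * Eᵀ).trace)
    (fun _ _ _ => by simp [Matrix.mul_add, Matrix.add_mul])
    (fun _ _ _ => by simp)
    (fun _ _ _ => by simp [Matrix.mul_add])
    (fun _ _ _ => by simp)
  refine B.convexOn_univ_apply_self fun D => ?_
  simpa [B, Matrix.mul_assoc] using hQ.trace_mul_nonneg (hS.mul_mul_conjTranspose_same D)

/-- the Final Control Error
`FCE(u_f) := ‖y_r − (M_0 + M u_f)θ̄‖_Q² + ‖u_r − u_f‖_R²
           + Tr[Q (M_0 + M u_f) Σ_θ (M_0 + M u_f)ᵀ]`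
is a convex function of `u_f`, for `Q, R, Σ_θ` symmetric positive semidefinite and
`M` linear. -/
theorem stmt_13 (d pT mT : ℕ) (θbar : Fin d → ℝ)
    (Sθ : Matrix (Fin d) (Fin d) ℝ) (hSθ : Sθ.PosSemidef)
    (M0 : Matrix (Fin pT) (Fin d) ℝ)
    (M : (Fin mT → ℝ) →ₗ[ℝ] Matrix (Fin pT) (Fin d) ℝ)
    (yr : Fin pT → ℝ) (ur : Fin mT → ℝ)
    (Q : Matrix (Fin pT) (Fin pT) ℝ) (R : Matrix (Fin mT) (Fin mT) ℝ)
    (hQ : Q.PosSemidef) (hR : R.PosSemidef) :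
    ConvexOn ℝ Set.univ (fun uf : Fin mT → ℝ =>
      (yr - (M0 + M uf) *ᵥ θbar) ⬝ᵥ (Q *ᵥ (yr - (M0 + M uf) *ᵥ θbar))
        + (ur - uf) ⬝ᵥ (R *ᵥ (ur - uf))
        + Matrix.trace (Q * (M0 + M uf) * Sθ * (M0 + M uf)ᵀ)) := by
  have hθ (uf : Fin mT → ℝ) : yr - (M0 + M uf) *ᵥ θbar
      = (yr - M0 *ᵥ θbar) + (-((mulVecBilin ℝ ℝ).flip θbar ∘ₗ M)) uf := by
    simp only [LinearMap.neg_apply, LinearMap.comp_apply, LinearMap.flip_apply, mulVecBilin_apply,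
      add_mulVec]
    abel
  have hu (uf : Fin mT → ℝ) : ur - uf = ur + (-LinearMap.id (R := ℝ)) uf :=
    sub_eq_add_neg ur uf
  simp_rw [hθ, hu]
  exact ((hQ.convexOn_dotProduct_mulVec.comp_add_linearMap _ _).add
    (hR.convexOn_dotProduct_mulVec.comp_add_linearMap _ _)).add
    ((convexOn_trace_mul_mul_mul_transpose hQ hSθ).comp_add_linearMap M0 M)
end
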